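/- arXiv:1610.09132 — 2 statements merged into one kernel-verified Lean document; each statement's English description precedes it below -/
import Mathlib

section
/- (Theorem 1) Let d ≥ 1 and let the requests (s_i, t_i), i = 1, 2, …, be picked independently and identically distributed in [0,1]^d × [0,1]^d with E[‖s_1 − t_1‖] = μ > 0. For each n, let c_n ≥ 1 be an integer dividing n with c_n / n^{1/(2d)} → 0, and let σ_n be any permutation of {1,…,n} whose tour length satisfies ‖T_n‖ ≤ K·n^{(2d−1)/(2d)} for a constant K independent of n. Let SOL_n = min_{0 ≤ j ≤ c_n−1} SOL_j^{(n)} and let OPT_n be the infimum of carried costs over all capacity-c_n plans for the first n requests. Then almost surely lim_{n→∞} SOL_n / OPT_n = 1. -/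
set_option maxHeartbeats 1000000


open scoped BigOperators

noncomputable section

/-- `d`-dimensional Euclidean space `ℝ^d`. -/
abbrev Pt (d : ℕ) := EuclideanSpace ℝ (Fin d)

/-- The distance between the requests `r_i = (s_i, t_i)` and `r_j = (s_j, t_j)` viewed as
points of `ℝ^{2d}` with the Euclidean norm: `‖r_i − r_j‖ = √(‖s_i − s_j‖² + ‖t_i − t_j‖²)`. -/
def reqDist {d n : ℕ} (s t : ZMod n → Pt d) (i j : ZMod n) : ℝ :=
  Real.sqrt (‖s i - s j‖ ^ 2 + ‖t i - t j‖ ^ 2)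

/-- The length `‖T‖` of the tour given by the permutation `σ` (indices cyclic mod `n`):
`‖T‖ = Σ_{i} ‖r_{σ(i)} − r_{σ(i+1)}‖` in `ℝ^{2d}`. -/
def tourLength {d n : ℕ} (s t : ZMod n → Pt d) (σ : Equiv.Perm (ZMod n)) : ℝ :=
  ∑ i ∈ Finset.range n, reqDist s t (σ (i : ZMod n)) (σ ((i : ZMod n) + 1))

/-- The LIFO trip cost of the group of `c` consecutive requests starting at cyclic
position `a`: pick up `σ(a), σ(a+1), …, σ(a+c−1)` in tour order and deliver in reverse. -/
def lifoCost {d n : ℕ} (s t : ZMod n → Pt d) (σ : Equiv.Perm (ZMod n)) (c : ℕ)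
    (a : ZMod n) : ℝ :=
  (∑ i ∈ Finset.range (c - 1), ‖s (σ (a + (i : ZMod n))) - s (σ (a + (i : ZMod n) + 1))‖)
    + ‖s (σ (a + ((c - 1 : ℕ) : ZMod n))) - t (σ (a + ((c - 1 : ℕ) : ZMod n)))‖
    + ∑ i ∈ Finset.range (c - 1), ‖t (σ (a + (i : ZMod n) + 1)) - t (σ (a + (i : ZMod n)))‖

/-- For offset `j`, the `g`-th group of `c` consecutive requests starts at cyclic position
`j + 1 + g·c`. -/
def groupStart (n c j g : ℕ) : ZMod n := ((j + 1 + g * c : ℕ) : ZMod n)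

/-- The candidate cost `SOL_j`: the cyclic sequence `σ(j+1), …, σ(j+n)` is split into `m`
consecutive groups of `c` requests, and `SOL_j` is the sum of their LIFO trip costs. -/
def SOLcost {d n : ℕ} (s t : ZMod n → Pt d) (σ : Equiv.Perm (ZMod n)) (c m j : ℕ) : ℝ :=
  ∑ g ∈ Finset.range m, lifoCost s t σ c (groupStart n c j g)

/-- A (nonpreemptive) plan serving the `n` requests `(s_i, t_i)` with a single vehicle of
capacity `c`: a finite route `p_0, p_1, …, p_M` in `ℝ^d`, with pickup step `a i` and
delivery step `b i` for each request `i` (object `i` is on board during steps `k` with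
`a i ≤ k < b i`), such that the load never exceeds `c`. -/
structure Plan (d n c : ℕ) (s t : Fin n → Pt d) where
  M : ℕ
  p : ℕ → Pt d
  a : Fin n → ℕ
  b : Fin n → ℕ
  hab : ∀ i, a i < b i
  hbM : ∀ i, b i ≤ M
  hstart : ∀ i, p (a i) = s i
  hend : ∀ i, p (b i) = t i
  hcap : ∀ k : ℕ, (Finset.univ.filter fun i => a i ≤ k ∧ k < b i).card ≤ c

/-- The load (number of objects on board) of the plan at step `k`. -/
def Plan.load {d n c : ℕ} {s t : Fin n → Pt d} (P : Plan d n c s t) (k : ℕ) : ℕ :=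
  (Finset.univ.filter fun i => P.a i ≤ k ∧ k < P.b i).card

/-- The carried cost of a plan: the distance traveled while carrying at least one object. -/
def Plan.carriedCost {d n c : ℕ} {s t : Fin n → Pt d} (P : Plan d n c s t) : ℝ :=
  ∑ k ∈ Finset.range P.M, if 1 ≤ P.load k then ‖P.p (k + 1) - P.p k‖ else 0

/-- The total cost of a plan: the total distance traveled by the vehicle. -/
def Plan.totalCost {d n c : ℕ} {s t : Fin n → Pt d} (P : Plan d n c s t) : ℝ :=
  ∑ k ∈ Finset.range P.M, ‖P.p (k + 1) - P.p k‖

open Filter MeasureTheory ProbabilityTheory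

lemma plan_lower {d n c : ℕ} {s t : Fin n → Pt d} (P : Plan d n c s t) :
    ∑ i : Fin n, ‖s i - t i‖ ≤ (c : ℝ) * P.carriedCost := by
  have h1 : ∀ i : Fin n, ‖s i - t i‖ ≤ ∑ k ∈ Finset.Ico (P.a i) (P.b i), ‖P.p (k+1) - P.p k‖ := by
    intro i
    have h := dist_le_range_sum_dist (fun m => P.p (P.a i + m)) (P.b i - P.a i)
    simp only [Nat.add_sub_cancel' (le_of_lt (P.hab i))] at h
    calc ‖s i - t i‖ = dist (P.p (P.a i)) (P.p (P.b i)) := by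
          rw [P.hstart, P.hend, dist_eq_norm]
      _ ≤ ∑ m ∈ Finset.range (P.b i - P.a i), dist (P.p (P.a i + m)) (P.p (P.a i + m + 1)) := by
          simpa [add_assoc] using h
      _ = ∑ k ∈ Finset.Ico (P.a i) (P.b i), ‖P.p (k+1) - P.p k‖ := by
          rw [Finset.sum_Ico_eq_sum_range]
          apply Finset.sum_congr rfl; intro m _
          rw [dist_eq_norm, norm_sub_rev]
  have h2 : ∑ i : Fin n, ∑ k ∈ Finset.Ico (P.a i) (P.b i), ‖P.p (k+1) - P.p k‖
      = ∑ k ∈ Finset.range P.M, (P.load k : ℝ) * ‖P.p (k+1) - P.p k‖ := by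
    have hIco : ∀ i : Fin n, Finset.Ico (P.a i) (P.b i)
        = (Finset.range P.M).filter (fun k => P.a i ≤ k ∧ k < P.b i) := by
      intro i; ext k
      simp only [Finset.mem_Ico, Finset.mem_filter, Finset.mem_range]
      constructor
      · rintro ⟨ha, hb⟩; exact ⟨lt_of_lt_of_le hb (P.hbM i), ha, hb⟩
      · tauto
    calc ∑ i : Fin n, ∑ k ∈ Finset.Ico (P.a i) (P.b i), ‖P.p (k+1) - P.p k‖
        = ∑ i : Fin n, ∑ k ∈ Finset.range P.M,
            if P.a i ≤ k ∧ k < P.b i then ‖P.p (k+1) - P.p k‖ else 0 := by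
          apply Finset.sum_congr rfl; intro i _
          rw [hIco i, Finset.sum_filter]
      _ = ∑ k ∈ Finset.range P.M, ∑ i : Fin n,
            if P.a i ≤ k ∧ k < P.b i then ‖P.p (k+1) - P.p k‖ else 0 := Finset.sum_comm
      _ = ∑ k ∈ Finset.range P.M, (P.load k : ℝ) * ‖P.p (k+1) - P.p k‖ := by
          apply Finset.sum_congr rfl; intro k _
          rw [← Finset.sum_filter, Finset.sum_const, Plan.load, nsmul_eq_mul]
  have h3 : ∀ k ∈ Finset.range P.M, (P.load k : ℝ) * ‖P.p (k+1) - P.p k‖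
      ≤ (c:ℝ) * (if 1 ≤ P.load k then ‖P.p (k+1) - P.p k‖ else 0) := by
    intro k _
    by_cases h : 1 ≤ P.load k
    · rw [if_pos h]
      apply mul_le_mul_of_nonneg_right _ (norm_nonneg _)
      exact_mod_cast P.hcap k
    · rw [if_neg h]
      push_neg at h
      rw [Nat.lt_one_iff] at h
      simp [h]
  calc ∑ i : Fin n, ‖s i - t i‖
      ≤ ∑ i : Fin n, ∑ k ∈ Finset.Ico (P.a i) (P.b i), ‖P.p (k+1) - P.p k‖ :=
        Finset.sum_le_sum fun i _ => h1 i
    _ = ∑ k ∈ Finset.range P.M, (P.load k : ℝ) * ‖P.p (k+1) - P.p k‖ := h2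
    _ ≤ ∑ k ∈ Finset.range P.M, (c:ℝ) * (if 1 ≤ P.load k then ‖P.p (k+1) - P.p k‖ else 0) :=
        Finset.sum_le_sum h3
    _ = (c : ℝ) * P.carriedCost := by rw [← Finset.mul_sum]; rfl

lemma sum_range_zmod {n : ℕ} [NeZero n] (f : ZMod n → ℝ) :
    ∑ i ∈ Finset.range n, f (i : ZMod n) = ∑ z : ZMod n, f z := by
  apply Finset.sum_nbij' (i := fun (i : ℕ) => ((i : ZMod n))) (j := fun z => z.val)
  · intro a ha; exact Finset.mem_univ _
  · intro z hz; exact Finset.mem_range.mpr z.val_lt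
  · intro a ha; exact ZMod.val_cast_of_lt (Finset.mem_range.mp ha)
  · intro z hz; simp [ZMod.natCast_val, ZMod.cast_id]
  · intro a ha; rfl

lemma two_norm_le {x y : ℝ} (hx : 0 ≤ x) (hy : 0 ≤ y) :
    x + y ≤ Real.sqrt 2 * Real.sqrt (x^2 + y^2) := by
  rw [← Real.sqrt_mul (by norm_num)]
  rw [show x + y = Real.sqrt ((x+y)^2) by rw [Real.sqrt_sq (by positivity)]]
  apply Real.sqrt_le_sqrt; nlinarith [sq_nonneg (x - y)]

lemma sol_avg {d n cc : ℕ} [NeZero n] (hc : 0 < cc) (hdvd : cc ∣ n)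
    (s t : ZMod n → Pt d) (σ : Equiv.Perm (ZMod n)) :
    ∑ j ∈ Finset.range cc, SOLcost s t σ cc (n / cc) j
      ≤ (∑ z : ZMod n, ‖s z - t z‖) + (cc : ℝ) * (Real.sqrt 2 * tourLength s t σ) := by
  have hn : 0 < n := Nat.pos_of_ne_zero (NeZero.ne n)
  set m := n / cc with hm
  have hmc : m * cc = n := Nat.div_mul_cancel hdvd
  have htour : tourLength s t σ = ∑ z : ZMod n, reqDist s t (σ z) (σ (z+1)) := by
    rw [tourLength]; exact sum_range_zmod (fun z => reqDist s t (σ z) (σ (z+1)))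
  have hreq0 : ∀ z : ZMod n, 0 ≤ reqDist s t (σ z) (σ (z+1)) :=
    fun z => Real.sqrt_nonneg _
  -- Part 2 : the s-s and t-t edges for a fixed offset j
  have hA : ∀ j ∈ Finset.range cc,
      (∑ g ∈ Finset.range m, ((∑ i ∈ Finset.range (cc-1),
        ‖s (σ (groupStart n cc j g + (i : ZMod n))) - s (σ (groupStart n cc j g + (i : ZMod n) + 1))‖)
        + ∑ i ∈ Finset.range (cc-1),
        ‖t (σ (groupStart n cc j g + (i : ZMod n) + 1)) - t (σ (groupStart n cc j g + (i : ZMod n)))‖))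
      ≤ Real.sqrt 2 * tourLength s t σ := by
    intro j hj
    have step1 : ∀ g ∈ Finset.range m,
        ((∑ i ∈ Finset.range (cc-1),
          ‖s (σ (groupStart n cc j g + (i : ZMod n))) - s (σ (groupStart n cc j g + (i : ZMod n) + 1))‖)
          + ∑ i ∈ Finset.range (cc-1),
          ‖t (σ (groupStart n cc j g + (i : ZMod n) + 1)) - t (σ (groupStart n cc j g + (i : ZMod n)))‖)
        ≤ ∑ i ∈ Finset.range (cc-1),
            Real.sqrt 2 * reqDist s t (σ (groupStart n cc j g + (i : ZMod n)))
              (σ (groupStart n cc j g + (i : ZMod n) + 1)) := by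
      intro g hg
      rw [← Finset.sum_add_distrib]
      apply Finset.sum_le_sum
      intro i hi
      rw [norm_sub_rev (t (σ (groupStart n cc j g + (i : ZMod n) + 1)))]
      exact two_norm_le (norm_nonneg _) (norm_nonneg _)
    calc _ ≤ ∑ g ∈ Finset.range m, ∑ i ∈ Finset.range (cc-1),
            Real.sqrt 2 * reqDist s t (σ (groupStart n cc j g + (i : ZMod n)))
              (σ (groupStart n cc j g + (i : ZMod n) + 1)) := Finset.sum_le_sum step1
      _ = Real.sqrt 2 * ∑ g ∈ Finset.range m, ∑ i ∈ Finset.range (cc-1),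
            reqDist s t (σ (groupStart n cc j g + (i : ZMod n)))
              (σ ((groupStart n cc j g + (i : ZMod n)) + 1)) := by
          rw [Finset.mul_sum]; apply Finset.sum_congr rfl; intro g _; rw [Finset.mul_sum]
      _ ≤ Real.sqrt 2 * ∑ z : ZMod n, reqDist s t (σ z) (σ (z+1)) := by
          apply mul_le_mul_of_nonneg_left _ (Real.sqrt_nonneg 2)
          have himg : ∑ g ∈ Finset.range m, ∑ i ∈ Finset.range (cc-1),
              reqDist s t (σ (groupStart n cc j g + (i : ZMod n)))
                (σ ((groupStart n cc j g + (i : ZMod n)) + 1))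
              = ∑ z ∈ (Finset.range m ×ˢ Finset.range (cc-1)).image
                  (fun p => groupStart n cc j p.1 + (p.2 : ZMod n)),
                  reqDist s t (σ z) (σ (z+1)) := by
            rw [Finset.sum_image, Finset.sum_product]
            rintro ⟨g, i⟩ hgi ⟨g', i'⟩ hgi' heq
            simp only [Finset.mem_coe, Finset.mem_product, Finset.mem_range] at hgi hgi'
            simp only [groupStart, ← Nat.cast_add, ZMod.natCast_eq_natCast_iff] at heq
            have hicc : i < cc := lt_of_lt_of_le hgi.2 (Nat.sub_le _ _)
            have hicc' : i' < cc := lt_of_lt_of_le hgi'.2 (Nat.sub_le _ _)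
            have h1 : g * cc + i < n := by
              have h2 : g * cc + i < (g+1) * cc := by nlinarith
              calc g * cc + i < (g+1)*cc := h2
                _ ≤ m * cc := Nat.mul_le_mul_right _ hgi.1
                _ = n := hmc
            have h1' : g' * cc + i' < n := by
              have h2 : g' * cc + i' < (g'+1) * cc := by nlinarith
              calc g' * cc + i' < (g'+1)*cc := h2
                _ ≤ m * cc := Nat.mul_le_mul_right _ hgi'.1
                _ = n := hmc
            have heq' : Nat.ModEq n ((g*cc+i)+(j+1)) ((g'*cc+i')+(j+1)) := by
              have hre : j + 1 + g * cc + i = (g*cc+i)+(j+1) := by ring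
              have hre' : j + 1 + g' * cc + i' = (g'*cc+i')+(j+1) := by ring
              rwa [hre, hre'] at heq
            have hcan := Nat.ModEq.add_right_cancel' (j+1) heq'
            have heq2 : g * cc + i = g' * cc + i' := by
              rwa [Nat.ModEq, Nat.mod_eq_of_lt h1, Nat.mod_eq_of_lt h1'] at hcan
            have hgg : g = g' := by
              rcases lt_trichotomy g g' with h | h | h
              · exfalso; have : g + 1 ≤ g' := h; nlinarith
              · exact h
              · exfalso; have : g' + 1 ≤ g := h; nlinarith
            subst hgg
            have : i = i' := by omega
            subst this; rfl
          rw [himg]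
          exact Finset.sum_le_sum_of_subset_of_nonneg (Finset.subset_univ _)
            (fun z _ _ => hreq0 z)
      _ = Real.sqrt 2 * tourLength s t σ := by rw [htour]
  -- Part 1 : the direct s-t legs, summed over all offsets
  have hB : ∑ j ∈ Finset.range cc, ∑ g ∈ Finset.range m,
      ‖s (σ (groupStart n cc j g + ((cc-1 : ℕ) : ZMod n)))
        - t (σ (groupStart n cc j g + ((cc-1 : ℕ) : ZMod n)))‖
      = ∑ z : ZMod n, ‖s z - t z‖ := by
    have key : ∀ j g : ℕ, groupStart n cc j g + ((cc-1 : ℕ) : ZMod n)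
        = ((j + (g+1)*cc : ℕ) : ZMod n) := by
      intro j g
      simp only [groupStart, ← Nat.cast_add]
      congr 1
      have e : (g+1)*cc = g*cc + cc := by ring
      omega
    have hperm : ∑ z : ZMod n, ‖s (σ z) - t (σ z)‖ = ∑ z : ZMod n, ‖s z - t z‖ :=
      Equiv.sum_comp σ (fun z => ‖s z - t z‖)
    rw [← hperm]
    simp only [key]
    rw [← Finset.sum_product']
    apply Finset.sum_nbij' (i := fun p : ℕ × ℕ => ((p.1 + (p.2+1)*cc : ℕ) : ZMod n))
      (j := fun z : ZMod n => (((z - ((cc : ℕ) : ZMod n)).val) % cc,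
        ((z - ((cc : ℕ) : ZMod n)).val) / cc))
    · intro p hp; exact Finset.mem_univ _
    · intro z hz
      simp only [Finset.mem_product, Finset.mem_range]
      refine ⟨Nat.mod_lt _ hc, ?_⟩
      rw [Nat.div_lt_iff_lt_mul hc, hmc]
      exact (z - ((cc : ℕ) : ZMod n)).val_lt
    · rintro ⟨j, g⟩ hp
      simp only [Finset.mem_product, Finset.mem_range] at hp
      have hlt : j + g * cc < n := by
        have h2 : j + g * cc < (g+1) * cc := by nlinarith [hp.1]
        calc j + g * cc < (g+1)*cc := h2
          _ ≤ m * cc := Nat.mul_le_mul_right _ hp.2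
          _ = n := hmc
      have hz : (((j + (g+1)*cc : ℕ) : ZMod n)) - ((cc : ℕ) : ZMod n)
          = ((j + g * cc : ℕ) : ZMod n) := by
        push_cast
        ring
      rw [hz, ZMod.val_cast_of_lt hlt]
      have e1 : (j + g * cc) % cc = j := by
        rw [Nat.add_mul_mod_self_right, Nat.mod_eq_of_lt hp.1]
      have e2 : (j + g * cc) / cc = g := by
        rw [Nat.add_mul_div_right _ _ hc, Nat.div_eq_of_lt hp.1, Nat.zero_add]
      simp [e1, e2]
    · intro z hz
      set u := (z - ((cc : ℕ) : ZMod n)).val with hu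
      have h1 : u % cc + (u / cc + 1) * cc = u + cc := by
        have h := Nat.mod_add_div' u cc
        have e : (u/cc+1)*cc = u/cc*cc + cc := by ring
        omega
      have h2 : ((u : ℕ) : ZMod n) = z - ((cc : ℕ) : ZMod n) := by
        simp [hu, ZMod.natCast_val, ZMod.cast_id]
      rw [h1]
      push_cast
      push_cast at h2
      rw [h2]
      ring
    · rintro ⟨j, g⟩ hp; rfl
  -- Assembly
  have hsplit : ∀ j, SOLcost s t σ cc m j
      = (∑ g ∈ Finset.range m, ((∑ i ∈ Finset.range (cc-1),
        ‖s (σ (groupStart n cc j g + (i : ZMod n))) - s (σ (groupStart n cc j g + (i : ZMod n) + 1))‖)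
        + ∑ i ∈ Finset.range (cc-1),
        ‖t (σ (groupStart n cc j g + (i : ZMod n) + 1)) - t (σ (groupStart n cc j g + (i : ZMod n)))‖))
      + ∑ g ∈ Finset.range m,
        ‖s (σ (groupStart n cc j g + ((cc-1 : ℕ) : ZMod n)))
          - t (σ (groupStart n cc j g + ((cc-1 : ℕ) : ZMod n)))‖ := by
    intro j
    rw [SOLcost, ← Finset.sum_add_distrib]
    apply Finset.sum_congr rfl
    intro g _
    rw [lifoCost]
    ring
  calc ∑ j ∈ Finset.range cc, SOLcost s t σ cc m j
      = (∑ j ∈ Finset.range cc, (∑ g ∈ Finset.range m, ((∑ i ∈ Finset.range (cc-1),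
          ‖s (σ (groupStart n cc j g + (i : ZMod n))) - s (σ (groupStart n cc j g + (i : ZMod n) + 1))‖)
          + ∑ i ∈ Finset.range (cc-1),
          ‖t (σ (groupStart n cc j g + (i : ZMod n) + 1)) - t (σ (groupStart n cc j g + (i : ZMod n)))‖)))
        + ∑ j ∈ Finset.range cc, ∑ g ∈ Finset.range m,
          ‖s (σ (groupStart n cc j g + ((cc-1 : ℕ) : ZMod n)))
            - t (σ (groupStart n cc j g + ((cc-1 : ℕ) : ZMod n)))‖ := by
        rw [← Finset.sum_add_distrib]
        exact Finset.sum_congr rfl fun j _ => hsplit j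
    _ ≤ (∑ j ∈ Finset.range cc, Real.sqrt 2 * tourLength s t σ)
        + ∑ z : ZMod n, ‖s z - t z‖ := by
        rw [hB]
        exact add_le_add (Finset.sum_le_sum hA) le_rfl
    _ = (∑ z : ZMod n, ‖s z - t z‖) + (cc : ℝ) * (Real.sqrt 2 * tourLength s t σ) := by
        rw [Finset.sum_const, Finset.card_range, nsmul_eq_mul]
        ring

/-- The route of the LIFO plan with offset `j`. -/
def lifoP (d n cc j : ℕ) (s t : ZMod n → Pt d) (σ : Equiv.Perm (ZMod n)) : ℕ → Pt d :=
  fun k => if k % (2*cc) < cc then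
    s (σ (groupStart n cc j (k/(2*cc)) + ((k % (2*cc) : ℕ) : ZMod n)))
  else
    t (σ (groupStart n cc j (k/(2*cc)) + ((2*cc - 1 - k % (2*cc) : ℕ) : ZMod n)))

/-- Cyclic position of request `i` relative to offset `j`. -/
def lifoQ (n cc j : ℕ) (σ : Equiv.Perm (ZMod n)) (i : Fin n) : ℕ :=
  (σ.symm ((i : ℕ) : ZMod n) - (((j+1 : ℕ)) : ZMod n)).val

lemma lifoP_eval {d n cc j : ℕ} (hc : 0 < cc) (s t : ZMod n → Pt d)
    (σ : Equiv.Perm (ZMod n)) (g r : ℕ) (hr : r < 2*cc) :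
    lifoP d n cc j s t σ (r + g*(2*cc)) =
      if r < cc then s (σ (groupStart n cc j g + (r : ZMod n)))
      else t (σ (groupStart n cc j g + ((2*cc - 1 - r : ℕ) : ZMod n))) := by
  unfold lifoP
  rw [Nat.add_mul_mod_self_right, Nat.mod_eq_of_lt hr,
    Nat.add_mul_div_right _ _ (by omega : 0 < 2*cc), Nat.div_eq_of_lt hr, Nat.zero_add]

lemma sum_range_mul_eq {M : Type*} [AddCommMonoid M] (f : ℕ → M) (m w : ℕ) :
    ∑ k ∈ Finset.range (m*w), f k = ∑ g ∈ Finset.range m, ∑ r ∈ Finset.range w, f (r + g*w) := by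
  induction m with
  | zero => simp
  | succ m ih =>
    have h1 : (m+1)*w = m*w + w := by ring
    rw [h1, Finset.range_eq_Ico,
      ← Finset.sum_Ico_consecutive f (Nat.zero_le (m*w)) (Nat.le_add_right _ _),
      ← Finset.range_eq_Ico, ih, Finset.sum_Ico_eq_sum_range, Finset.sum_range_succ]
    congr 1
    · simp [Nat.add_sub_cancel_left]
      apply Finset.sum_congr rfl
      intro r _
      congr 1
      omega

set_option maxHeartbeats 2000000 in
lemma exists_lifo_plan {d n cc : ℕ} [NeZero n] (hc : 0 < cc) (hdvd : cc ∣ n)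
    (s t : ZMod n → Pt d) (sF tF : Fin n → Pt d)
    (hs : ∀ i : Fin n, sF i = s ((i : ℕ) : ZMod n))
    (ht : ∀ i : Fin n, tF i = t ((i : ℕ) : ZMod n))
    (σ : Equiv.Perm (ZMod n)) (j : ℕ) :
    ∃ P : Plan d n cc sF tF, P.carriedCost ≤ SOLcost s t σ cc (n / cc) j := by
  have hn : 0 < n := Nat.pos_of_ne_zero (NeZero.ne n)
  set m := n / cc with hm
  have hmc : m * cc = n := Nat.div_mul_cancel hdvd
  set w := 2*cc with hww
  have hw0 : 0 < w := by omega
  set q : Fin n → ℕ := lifoQ n cc j σ with hqdef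
  have hqlt : ∀ i, q i < n := fun i => ZMod.val_lt _
  have hq : ∀ i, σ (((j+1+q i : ℕ)) : ZMod n) = ((i : ℕ) : ZMod n) := by
    intro i
    have h2 : (((j+1+q i : ℕ)) : ZMod n) = σ.symm ((i : ℕ) : ZMod n) := by
      push_cast
      rw [hqdef]
      simp only [lifoQ, ZMod.natCast_val, ZMod.cast_id]
      push_cast
      ring
    rw [h2, Equiv.apply_symm_apply]
  have hqinj : Function.Injective q := by
    intro i i' he
    have h1 : ((i : ℕ) : ZMod n) = ((i' : ℕ) : ZMod n) := by rw [← hq i, ← hq i', he]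
    have h2 := congrArg ZMod.val h1
    rw [ZMod.val_cast_of_lt i.isLt, ZMod.val_cast_of_lt i'.isLt] at h2
    exact Fin.ext h2
  have hGlt : ∀ i, q i / cc < m := by
    intro i
    rw [Nat.div_lt_iff_lt_mul hc, hmc]
    exact hqlt i
  have hrlt : ∀ i, q i % cc < cc := fun i => Nat.mod_lt _ hc
  have hmad : ∀ i, q i % cc + q i / cc * cc = q i := fun i => Nat.mod_add_div' _ _
  -- the plan
  refine ⟨{ M := m * w
            p := lifoP d n cc j s t σ
            a := fun i => q i % cc + (q i / cc) * w
            b := fun i => (w - 1 - q i % cc) + (q i / cc) * w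
            hab := ?_
            hbM := ?_
            hstart := ?_
            hend := ?_
            hcap := ?_ }, ?_⟩
  · intro i
    have := hrlt i
    omega
  · intro i
    have h1 : q i / cc + 1 ≤ m := hGlt i
    have h2 : (q i / cc + 1) * w ≤ m * w := Nat.mul_le_mul_right _ h1
    have := hrlt i
    have h3 : (q i / cc + 1) * w = q i / cc * w + w := by ring
    omega
  · intro i
    rw [lifoP_eval hc s t σ _ _ (by have := hrlt i; omega), if_pos (hrlt i)]
    rw [hs i, ← hq i]
    rw [groupStart, ← Nat.cast_add]
    have h5 : j + 1 + q i / cc * cc + q i % cc = j + 1 + q i := by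
      have := hmad i; omega
    rw [h5]
  · intro i
    have hb1 : w - 1 - q i % cc < w := by have := hrlt i; omega
    rw [lifoP_eval hc s t σ _ _ hb1, if_neg (by have := hrlt i; omega)]
    rw [ht i, ← hq i]
    rw [groupStart, ← Nat.cast_add]
    have h5 : j + 1 + q i / cc * cc + (2 * cc - 1 - (w - 1 - q i % cc)) = j + 1 + q i := by
      have := hmad i; have := hrlt i; omega
    rw [h5]
  · intro k
    set G := k / w with hG
    have hsub : (Finset.univ.filter fun i : Fin n =>
          q i % cc + (q i / cc) * w ≤ k ∧ k < (w - 1 - q i % cc) + (q i / cc) * w)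
        ⊆ Finset.univ.filter fun i : Fin n => q i / cc = G := by
      intro i hi
      simp only [Finset.mem_filter, Finset.mem_univ, true_and] at hi ⊢
      have h1 : q i / cc * w ≤ k := le_trans (Nat.le_add_left _ _) hi.1
      have h2 : k < (q i / cc + 1) * w := by
        have := hi.2
        have := hrlt i
        have h3 : (q i / cc + 1) * w = q i / cc * w + w := by ring
        omega
      rw [hG]
      symm
      exact Nat.div_eq_of_lt_le h1 (by rw [Nat.succ_mul] at h2 ⊢; omega)
    refine le_trans (Finset.card_le_card hsub) ?_
    have hmap : ∀ i ∈ (Finset.univ.filter fun i : Fin n => q i / cc = G),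
        q i ∈ Finset.Ico (G * cc) (G * cc + cc) := by
      intro i hi
      simp only [Finset.mem_filter, Finset.mem_univ, true_and] at hi
      rw [Finset.mem_Ico]
      have h1 := hmad i
      have h2 := hrlt i
      rw [hi] at h1
      omega
    have := Finset.card_le_card_of_injOn q hmap (fun x _ y _ hxy => hqinj hxy)
    simpa [Nat.card_Ico] using this
  · -- carried cost bound
    rw [Plan.carriedCost]
    simp only [Plan.load]
    rw [sum_range_mul_eq, SOLcost]
    apply Finset.sum_le_sum
    intro g hg
    set A := groupStart n cc j g with hA
    -- the last step of each trip carries nothing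
    have hload0 : (Finset.filter (fun i : Fin n =>
        q i % cc + q i / cc * w ≤ (w-1) + g*w ∧ (w-1) + g*w < w - 1 - q i % cc + q i / cc * w)
        Finset.univ) = ∅ := by
      rw [Finset.filter_eq_empty_iff]
      rintro i -
      rintro ⟨h1, h2⟩
      have hr := hrlt i
      have hgG : g * w < q i / cc * w := by omega
      have hgG2 : g < q i / cc := lt_of_mul_lt_mul_right hgG (Nat.zero_le w)
      have hgG3 : (g+1) * w ≤ (q i / cc) * w := Nat.mul_le_mul_right w hgG2
      have he : (g+1)*w = g*w + w := by ring
      omega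
    have hterm0 : (if 1 ≤ (Finset.filter (fun i : Fin n =>
        q i % cc + q i / cc * w ≤ (w-1) + g*w ∧ (w-1) + g*w < w - 1 - q i % cc + q i / cc * w)
        Finset.univ).card then
          ‖lifoP d n cc j s t σ (((w-1) + g*w) + 1) - lifoP d n cc j s t σ ((w-1) + g*w)‖
        else 0) = 0 := by
      rw [hload0]
      simp
    -- split off the last step
    have hwsucc : Finset.range w = Finset.range ((w-1)+1) := by
      congr 1; omega
    rw [hwsucc, Finset.sum_range_succ, hterm0, add_zero]
    -- bound each carried step by the corresponding norm
    have hstep : ∀ r ∈ Finset.range (w-1),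
        (if 1 ≤ (Finset.filter (fun i : Fin n =>
          q i % cc + q i / cc * w ≤ r + g*w ∧ r + g*w < w - 1 - q i % cc + q i / cc * w)
          Finset.univ).card then
            ‖lifoP d n cc j s t σ ((r + g*w) + 1) - lifoP d n cc j s t σ (r + g*w)‖
          else 0)
        ≤ ‖lifoP d n cc j s t σ ((r+1) + g*w) - lifoP d n cc j s t σ (r + g*w)‖ := by
      intro r _
      have harg : (r + g*w) + 1 = (r+1) + g*w := by omega
      rw [harg]
      split
      · exact le_refl _
      · exact norm_nonneg _
    refine le_trans (Finset.sum_le_sum hstep) (le_of_eq ?_)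
    -- now compute the norms
    set D : ℕ → ℝ := fun r =>
      ‖lifoP d n cc j s t σ ((r+1) + g*w) - lifoP d n cc j s t σ (r + g*w)‖ with hD
    show ∑ r ∈ Finset.range (w-1), D r = lifoCost s t σ cc A
    have hsplit1 : ∑ r ∈ Finset.range (w-1), D r
        = ∑ r ∈ Finset.range cc, D r + ∑ x ∈ Finset.range (cc-1), D (cc+x) := by
      rw [Finset.range_eq_Ico,
        ← Finset.sum_Ico_consecutive D (Nat.zero_le cc) (by omega : cc ≤ w-1),
        ← Finset.range_eq_Ico, Finset.sum_Ico_eq_sum_range,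
        show w - 1 - cc = cc - 1 from by omega]
    have hsplit2 : ∑ r ∈ Finset.range cc, D r
        = ∑ r ∈ Finset.range (cc-1), D r + D (cc-1) := by
      conv_lhs => rw [show cc = (cc-1)+1 from by omega]
      rw [Finset.sum_range_succ]
    -- the three pieces
    have hS1 : ∑ r ∈ Finset.range (cc-1), D r
        = ∑ i ∈ Finset.range (cc-1), ‖s (σ (A + (i : ZMod n))) - s (σ (A + (i : ZMod n) + 1))‖ := by
      apply Finset.sum_congr rfl
      intro r hr
      rw [Finset.mem_range] at hr
      rw [hD]
      simp only
      rw [lifoP_eval hc s t σ g (r+1) (by omega), lifoP_eval hc s t σ g r (by omega),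
        if_pos (by omega : r+1 < cc), if_pos (by omega : r < cc)]
      rw [norm_sub_rev]
      congr 2
      rw [hA]
      push_cast
      ring
    have hS2 : D (cc-1) = ‖s (σ (A + ((cc-1 : ℕ) : ZMod n))) - t (σ (A + ((cc-1 : ℕ) : ZMod n)))‖ := by
      rw [hD]
      simp only
      have h1 : cc - 1 + 1 = cc := by omega
      rw [h1, lifoP_eval hc s t σ g cc (by omega), lifoP_eval hc s t σ g (cc-1) (by omega),
        if_neg (by omega : ¬ cc < cc), if_pos (by omega : cc - 1 < cc),
        show 2*cc - 1 - cc = cc - 1 from by omega]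
      rw [norm_sub_rev]
    have hS3 : ∑ x ∈ Finset.range (cc-1), D (cc+x)
        = ∑ i ∈ Finset.range (cc-1), ‖t (σ (A + (i : ZMod n) + 1)) - t (σ (A + (i : ZMod n)))‖ := by
      rw [← Finset.sum_range_reflect (fun i => ‖t (σ (A + (i : ZMod n) + 1)) - t (σ (A + (i : ZMod n)))‖) (cc-1)]
      apply Finset.sum_congr rfl
      intro x hx
      rw [Finset.mem_range] at hx
      rw [hD]
      simp only
      rw [lifoP_eval hc s t σ g (cc+x+1) (by omega), lifoP_eval hc s t σ g (cc+x) (by omega),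
        if_neg (by omega : ¬ cc+x+1 < cc), if_neg (by omega : ¬ cc+x < cc)]
      rw [norm_sub_rev]
      have e1 : 2*cc - 1 - (cc+x+1) = cc-1-1-x := by omega
      have e2 : A + ((cc-1-1-x : ℕ) : ZMod n) + 1 = A + ((2*cc - 1 - (cc+x) : ℕ) : ZMod n) := by
        have e3 : 2*cc - 1 - (cc+x) = (cc-1-1-x) + 1 := by omega
        rw [e3]
        push_cast
        ring
      rw [e1, ← e2]
    rw [hsplit1, hsplit2, hS1, hS2, hS3, lifoCost]

lemma slln_aux {Ω : Type*} [MeasureSpace Ω] [IsProbabilityMeasure (ℙ : Measure Ω)]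
    (d : ℕ) (S T : ℕ → Ω → Pt d)
    (hmeas : ∀ i, Measurable (fun ω => (S i ω, T i ω)))
    (hindep : iIndepFun (fun i ω => (S i ω, T i ω)) ℙ)
    (hident : ∀ i, IdentDistrib (fun ω => (S i ω, T i ω)) (fun ω => (S 0 ω, T 0 ω)) ℙ ℙ)
    (hrange : ∀ i ω k, S i ω k ∈ Set.Icc (0 : ℝ) 1 ∧ T i ω k ∈ Set.Icc (0 : ℝ) 1)
    (μ : ℝ) (hμ : μ = ∫ ω, ‖S 0 ω - T 0 ω‖) :
    ∀ᵐ ω ∂(ℙ : Measure Ω), Tendsto (fun n : ℕ => (n : ℝ)⁻¹ * ∑ i ∈ Finset.range n, ‖S i ω - T i ω‖)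
      atTop (nhds μ) := by
  have hf : Measurable (fun p : Pt d × Pt d => ‖p.1 - p.2‖) :=
    (measurable_fst.sub measurable_snd).norm
  have hXmeas : ∀ i, Measurable (fun ω => ‖S i ω - T i ω‖) := fun i =>
    ((hmeas i).fst.sub (hmeas i).snd).norm
  have hbdd : ∀ i ω, ‖S i ω - T i ω‖ ≤ Real.sqrt d := by
    intro i ω
    rw [EuclideanSpace.norm_eq]
    have h1 : (∑ k, ‖(S i ω - T i ω) k‖ ^ 2) ≤ (d : ℝ) := by
      have h2 : ∀ k : Fin d, ‖(S i ω - T i ω) k‖ ^ 2 ≤ 1 := by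
        intro k
        have h3 := (hrange i ω k).1
        have h4 := (hrange i ω k).2
        simp only [Set.mem_Icc] at h3 h4
        have h5 : (S i ω - T i ω) k = S i ω k - T i ω k := rfl
        rw [h5, Real.norm_eq_abs, sq_abs]
        nlinarith
      calc (∑ k, ‖(S i ω - T i ω) k‖ ^ 2) ≤ ∑ _k : Fin d, (1:ℝ) :=
            Finset.sum_le_sum fun k _ => h2 k
        _ = d := by simp
    exact Real.sqrt_le_sqrt h1
  have hint : Integrable (fun ω => ‖S 0 ω - T 0 ω‖) ℙ := by
    apply (integrable_const (Real.sqrt d)).mono' (hXmeas 0).aestronglyMeasurable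
    filter_upwards with ω
    rw [Real.norm_eq_abs, abs_of_nonneg (norm_nonneg _)]
    exact hbdd 0 ω
  have hpair : Pairwise (Function.onFun (fun x1 x2 => IndepFun x1 x2 ℙ) (fun i ω => ‖S i ω - T i ω‖)) := by
    intro i j hij
    exact (hindep.indepFun hij).comp hf hf
  have hid : ∀ i, IdentDistrib (fun ω => ‖S i ω - T i ω‖) (fun ω => ‖S 0 ω - T 0 ω‖) ℙ ℙ :=
    fun i => (hident i).comp hf
  have h := strong_law_ae (fun i ω => ‖S i ω - T i ω‖) hint hpair hid
  filter_upwards [h] with ω hω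
  have he : ∫ x, ‖S 0 x - T 0 x‖ ∂ℙ = μ := by rw [hμ]
  rw [he] at hω
  simpa only [smul_eq_mul] using hω

/-- Theorem 1: the requests `(s_i, t_i)` are picked i.i.d. in
`[0,1]^d × [0,1]^d` with `E[‖s_1 − t_1‖] = μ > 0`; `c_n ∣ n` with `c_n / n^{1/(2d)} → 0`;
`σ_n` is any permutation (possibly depending on the sample) whose tour length satisfies
`‖T_n‖ ≤ K·n^{(2d−1)/(2d)}`. With `SOL_n = min_{0 ≤ j < c_n} SOL_j^{(n)}` and `OPT_n` the
infimum of carried costs over all capacity-`c_n` plans for the first `n` requests,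
almost surely `SOL_n / OPT_n → 1`. -/
theorem stmt_9 {Ω : Type*} [MeasureSpace Ω] [IsProbabilityMeasure (ℙ : Measure Ω)]
    (d : ℕ) (hd : 1 ≤ d) (S T : ℕ → Ω → Pt d)
    (hmeas : ∀ i, Measurable (fun ω => (S i ω, T i ω)))
    (hindep : iIndepFun (fun i ω => (S i ω, T i ω)) ℙ)
    (hident : ∀ i, IdentDistrib (fun ω => (S i ω, T i ω)) (fun ω => (S 0 ω, T 0 ω)) ℙ ℙ)
    (hrange : ∀ i ω k, S i ω k ∈ Set.Icc (0 : ℝ) 1 ∧ T i ω k ∈ Set.Icc (0 : ℝ) 1)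
    (μ : ℝ) (hμ : μ = ∫ ω, ‖S 0 ω - T 0 ω‖) (hμpos : 0 < μ)
    (c : ℕ → ℕ) (hc : ∀ n, 0 < c n) (hdvd : ∀ n, c n ∣ n)
    (hclim : Tendsto (fun n : ℕ => (c n : ℝ) / (n : ℝ) ^ ((1 : ℝ) / (2 * d))) atTop (nhds 0))
    (σ : (n : ℕ) → Ω → Equiv.Perm (ZMod n)) (K : ℝ)
    (hT : ∀ (n : ℕ) (ω : Ω),
      tourLength (fun i : ZMod n => S i.val ω) (fun i : ZMod n => T i.val ω) (σ n ω)
        ≤ K * (n : ℝ) ^ (((2 * d : ℝ) - 1) / (2 * d))) :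
    ∀ᵐ ω ∂(ℙ : Measure Ω),
      Tendsto (fun n : ℕ =>
          ((Finset.range (c n)).inf' (Finset.nonempty_range_iff.mpr (hc n).ne')
              (fun j => SOLcost (fun i : ZMod n => S i.val ω) (fun i : ZMod n => T i.val ω)
                (σ n ω) (c n) (n / c n) j))
            / sInf {x : ℝ | ∃ P : Plan d n (c n)
                (fun i : Fin n => S i.val ω) (fun i : Fin n => T i.val ω),
                P.carriedCost = x})
        atTop (nhds 1) := by
  filter_upwards [slln_aux d S T hmeas hindep hident hrange μ hμ] with ω hL
  set L : ℕ → ℝ := fun n => ∑ i ∈ Finset.range n, ‖S i ω - T i ω‖ with hLdef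
  have hL2 : Tendsto (fun n : ℕ => (n : ℝ)⁻¹ * L n) atTop (nhds μ) := hL
  set γ : ℝ := ((2 * d : ℝ) - 1) / (2 * d) with hγdef
  have hd1 : (1:ℝ) ≤ (d:ℝ) := by exact_mod_cast hd
  have h2d : (0:ℝ) < 2 * d := by linarith
  -- eventual positivity of L
  have hLpos : ∀ᶠ n : ℕ in atTop, 0 < L n := by
    have h2 := hL2.eventually (eventually_gt_nhds (half_lt_self hμpos))
    filter_upwards [h2, eventually_ge_atTop 1] with n hn hn1
    have hn0 : (0:ℝ) < n := by exact_mod_cast hn1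
    have h5 : (n:ℝ) * ((n:ℝ)⁻¹ * L n) = L n := by field_simp
    nlinarith [mul_pos hn0 (lt_trans (half_pos hμpos) hn)]
  -- the two-sided bound on the ratio
  have hmain : ∀ᶠ n : ℕ in atTop,
      (1 : ℝ) ≤ ((Finset.range (c n)).inf' (Finset.nonempty_range_iff.mpr (hc n).ne')
              (fun j => SOLcost (fun i : ZMod n => S i.val ω) (fun i : ZMod n => T i.val ω)
                (σ n ω) (c n) (n / c n) j))
            / sInf {x : ℝ | ∃ P : Plan d n (c n)
                (fun i : Fin n => S i.val ω) (fun i : Fin n => T i.val ω),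
                P.carriedCost = x}
      ∧ ((Finset.range (c n)).inf' (Finset.nonempty_range_iff.mpr (hc n).ne')
              (fun j => SOLcost (fun i : ZMod n => S i.val ω) (fun i : ZMod n => T i.val ω)
                (σ n ω) (c n) (n / c n) j))
            / sInf {x : ℝ | ∃ P : Plan d n (c n)
                (fun i : Fin n => S i.val ω) (fun i : Fin n => T i.val ω),
                P.carriedCost = x}
          ≤ 1 + Real.sqrt 2 * (K * (n : ℝ) ^ γ) * (c n) / L n := by
    filter_upwards [hLpos, eventually_ge_atTop 1] with n hLn hn1
    haveI : NeZero n := ⟨by omega⟩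
    have hcpos : (0:ℝ) < (c n : ℝ) := by exact_mod_cast hc n
    have hs' : ∀ i : Fin n, (fun i : Fin n => S i.val ω) i
        = (fun z : ZMod n => S z.val ω) ((i : ℕ) : ZMod n) := by
      intro i
      simp [ZMod.val_cast_of_lt i.isLt]
    have ht' : ∀ i : Fin n, (fun i : Fin n => T i.val ω) i
        = (fun z : ZMod n => T z.val ω) ((i : ℕ) : ZMod n) := by
      intro i
      simp [ZMod.val_cast_of_lt i.isLt]
    have h7 : (∑ i : Fin n, ‖S (i:ℕ) ω - T (i:ℕ) ω‖) = L n :=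
      Fin.sum_univ_eq_sum_range (fun k => ‖S k ω - T k ω‖) n
    have hlow : ∀ x ∈ {x : ℝ | ∃ P : Plan d n (c n)
        (fun i : Fin n => S i.val ω) (fun i : Fin n => T i.val ω), P.carriedCost = x},
        L n / c n ≤ x := by
      rintro x ⟨P, rfl⟩
      rw [div_le_iff₀ hcpos]
      calc L n = ∑ i : Fin n, ‖S (i:ℕ) ω - T (i:ℕ) ω‖ := h7.symm
        _ ≤ (c n : ℝ) * P.carriedCost := plan_lower P
        _ = P.carriedCost * (c n : ℝ) := mul_comm _ _
    have hplan : ∀ j : ℕ, ∃ P : Plan d n (c n)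
        (fun i : Fin n => S i.val ω) (fun i : Fin n => T i.val ω),
        P.carriedCost ≤ SOLcost (fun z : ZMod n => S z.val ω) (fun z : ZMod n => T z.val ω)
          (σ n ω) (c n) (n / c n) j := fun j =>
      exists_lifo_plan (hc n) (hdvd n) _ _ _ _ hs' ht' (σ n ω) j
    have hne : Set.Nonempty {x : ℝ | ∃ P : Plan d n (c n)
        (fun i : Fin n => S i.val ω) (fun i : Fin n => T i.val ω), P.carriedCost = x} := by
      obtain ⟨P, -⟩ := hplan 0
      exact ⟨P.carriedCost, P, rfl⟩
    have hbdd : BddBelow {x : ℝ | ∃ P : Plan d n (c n)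
        (fun i : Fin n => S i.val ω) (fun i : Fin n => T i.val ω), P.carriedCost = x} :=
      ⟨L n / c n, hlow⟩
    have hOlow : L n / c n ≤ sInf {x : ℝ | ∃ P : Plan d n (c n)
        (fun i : Fin n => S i.val ω) (fun i : Fin n => T i.val ω), P.carriedCost = x} :=
      le_csInf hne hlow
    have hOpos : 0 < sInf {x : ℝ | ∃ P : Plan d n (c n)
        (fun i : Fin n => S i.val ω) (fun i : Fin n => T i.val ω), P.carriedCost = x} :=
      lt_of_lt_of_le (div_pos hLn hcpos) hOlow
    have hOA : sInf {x : ℝ | ∃ P : Plan d n (c n)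
        (fun i : Fin n => S i.val ω) (fun i : Fin n => T i.val ω), P.carriedCost = x}
        ≤ (Finset.range (c n)).inf' (Finset.nonempty_range_iff.mpr (hc n).ne')
            (fun j => SOLcost (fun i : ZMod n => S i.val ω) (fun i : ZMod n => T i.val ω)
              (σ n ω) (c n) (n / c n) j) := by
      apply Finset.le_inf'
      intro j hj
      obtain ⟨P, hP⟩ := hplan j
      exact le_trans (csInf_le hbdd ⟨P, rfl⟩) hP
    -- upper bound on the inf'
    have hAup : (Finset.range (c n)).inf' (Finset.nonempty_range_iff.mpr (hc n).ne')
        (fun j => SOLcost (fun i : ZMod n => S i.val ω) (fun i : ZMod n => T i.val ω)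
          (σ n ω) (c n) (n / c n) j)
        ≤ L n / c n + Real.sqrt 2 * (K * (n : ℝ) ^ γ) := by
      set A := (Finset.range (c n)).inf' (Finset.nonempty_range_iff.mpr (hc n).ne')
        (fun j => SOLcost (fun i : ZMod n => S i.val ω) (fun i : ZMod n => T i.val ω)
          (σ n ω) (c n) (n / c n) j) with hAdef
      have h1 : (c n : ℝ) * A ≤ ∑ j ∈ Finset.range (c n),
          SOLcost (fun i : ZMod n => S i.val ω) (fun i : ZMod n => T i.val ω)
            (σ n ω) (c n) (n / c n) j := by
        calc (c n : ℝ) * A = ∑ _j ∈ Finset.range (c n), A := by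
              rw [Finset.sum_const, Finset.card_range, nsmul_eq_mul]
          _ ≤ _ := Finset.sum_le_sum fun j hj => Finset.inf'_le _ hj
      have h2 := sol_avg (hc n) (hdvd n) (fun z : ZMod n => S z.val ω)
        (fun z : ZMod n => T z.val ω) (σ n ω)
      have h3 : (∑ z : ZMod n, ‖S z.val ω - T z.val ω‖) = L n := by
        rw [← sum_range_zmod (fun z : ZMod n => ‖S z.val ω - T z.val ω‖)]
        apply Finset.sum_congr rfl
        intro i hi
        rw [ZMod.val_cast_of_lt (Finset.mem_range.mp hi)]
      have h4 : Real.sqrt 2 * tourLength (fun i : ZMod n => S i.val ω)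
            (fun i : ZMod n => T i.val ω) (σ n ω)
          ≤ Real.sqrt 2 * (K * (n : ℝ) ^ γ) := by
        apply mul_le_mul_of_nonneg_left _ (Real.sqrt_nonneg 2)
        exact hT n ω
      have h5 : (c n : ℝ) * A ≤ L n + (c n : ℝ) * (Real.sqrt 2 * (K * (n : ℝ) ^ γ)) := by
        have h6 := mul_le_mul_of_nonneg_left h4 hcpos.le
        calc (c n : ℝ) * A ≤ _ := h1
          _ ≤ (∑ z : ZMod n, ‖S z.val ω - T z.val ω‖) + (c n : ℝ) *
              (Real.sqrt 2 * tourLength (fun i : ZMod n => S i.val ω)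
                (fun i : ZMod n => T i.val ω) (σ n ω)) := h2
          _ ≤ L n + (c n : ℝ) * (Real.sqrt 2 * (K * (n : ℝ) ^ γ)) := by
              rw [h3]; linarith
      have h8 : (c n : ℝ) * (L n / c n + Real.sqrt 2 * (K * (n : ℝ) ^ γ))
          = L n + (c n : ℝ) * (Real.sqrt 2 * (K * (n : ℝ) ^ γ)) := by
        field_simp
      refine le_of_mul_le_mul_left ?_ hcpos
      rw [h8]
      exact h5
    constructor
    · rw [le_div_iff₀ hOpos, one_mul]
      exact hOA
    · have hApos : 0 ≤ (Finset.range (c n)).inf' (Finset.nonempty_range_iff.mpr (hc n).ne')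
          (fun j => SOLcost (fun i : ZMod n => S i.val ω) (fun i : ZMod n => T i.val ω)
            (σ n ω) (c n) (n / c n) j) := le_trans hOpos.le hOA
      calc _ ≤ ((Finset.range (c n)).inf' (Finset.nonempty_range_iff.mpr (hc n).ne')
            (fun j => SOLcost (fun i : ZMod n => S i.val ω) (fun i : ZMod n => T i.val ω)
              (σ n ω) (c n) (n / c n) j)) / (L n / c n) :=
            div_le_div_of_nonneg_left hApos (div_pos hLn hcpos) hOlow
        _ ≤ (L n / c n + Real.sqrt 2 * (K * (n : ℝ) ^ γ)) / (L n / c n) :=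
            (div_le_div_iff_of_pos_right (div_pos hLn hcpos)).mpr hAup
        _ = 1 + Real.sqrt 2 * (K * (n : ℝ) ^ γ) * (c n) / L n := by
            rw [add_div, div_self (ne_of_gt (div_pos hLn hcpos)), div_div_eq_mul_div]
  -- the upper bound tends to 1
  have hγeq : ∀ n : ℕ, 1 ≤ n → (n:ℝ) ^ γ = (n:ℝ) / (n:ℝ) ^ ((1:ℝ) / (2 * (d:ℝ))) := by
    intro n hn
    have hnp : (0:ℝ) < n := by exact_mod_cast hn
    rw [eq_div_iff (ne_of_gt (Real.rpow_pos_of_pos hnp _)), ← Real.rpow_add hnp]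
    have he : γ + 1 / (2 * (d:ℝ)) = 1 := by
      rw [hγdef]
      field_simp
      ring
    rw [he, Real.rpow_one]
  have hnL : Tendsto (fun n : ℕ => (n:ℝ) / L n) atTop (nhds μ⁻¹) := by
    have h1 := hL2.inv₀ hμpos.ne'
    refine h1.congr' ?_
    filter_upwards [eventually_ge_atTop 1] with n hn1
    rw [mul_inv, inv_inv, ← div_eq_mul_inv]
  have hterm : Tendsto (fun n : ℕ => Real.sqrt 2 * (K * (n : ℝ) ^ γ) * (c n) / L n)
      atTop (nhds 0) := by
    have h0 : Tendsto (fun n : ℕ => (Real.sqrt 2 * K) *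
        (((c n : ℝ) / (n : ℝ) ^ ((1 : ℝ) / (2 * (d:ℝ)))) * ((n:ℝ) / L n)))
        atTop (nhds ((Real.sqrt 2 * K) * (0 * μ⁻¹))) :=
      tendsto_const_nhds.mul (hclim.mul hnL)
    rw [show (Real.sqrt 2 * K) * (0 * μ⁻¹) = 0 by ring] at h0
    refine h0.congr' ?_
    filter_upwards [eventually_ge_atTop 1] with n hn1
    rw [hγeq n hn1]
    ring
  have hU : Tendsto (fun n : ℕ => 1 + Real.sqrt 2 * (K * (n : ℝ) ^ γ) * (c n) / L n)
      atTop (nhds 1) := by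
    have h9 := (tendsto_const_nhds (x := (1:ℝ)) (f := atTop (α := ℕ))).add hterm
    simpa using h9
  refine tendsto_of_tendsto_of_tendsto_of_le_of_le' tendsto_const_nhds hU ?_ ?_
  · exact hmain.mono fun n hn => hn.1
  · exact hmain.mono fun n hn => hn.2
end
end

section
/- (Lemma 2) Let j* be an offset minimizing SOL_j over j ∈ {0,1,…,c−1}, let π be any ordering of the m groups of offset j*, and for k = 1,…,m−1 let the vehicle drive an empty connecting leg from the final delivery point of the group trip π(k) to the first pickup point of the group trip π(k+1); let ‖S_0‖ denote the total Euclidean length of these empty connecting legs (together with any initial and final empty legs included in ‖S_0‖). Then the total length SOL of the resulting single-vehicle route (the m LIFO group trips interleaved with the empty legs) satisfies SOL ≤ (1/c)·Σ_{i=1}^n ‖s_i − t_i‖ + √2·((c−1)/c)·‖T‖ + ‖S_0‖. -/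
open scoped BigOperators

noncomputable section

section Aux

lemma aux_add_le_sqrt2 (x y : ℝ) (hx : 0 ≤ x) (hy : 0 ≤ y) :
    x + y ≤ Real.sqrt 2 * Real.sqrt (x ^ 2 + y ^ 2) := by
  rw [← Real.sqrt_mul (by norm_num)]
  calc x + y = Real.sqrt ((x + y) ^ 2) := (Real.sqrt_sq (by positivity)).symm
    _ ≤ Real.sqrt (2 * (x ^ 2 + y ^ 2)) :=
        Real.sqrt_le_sqrt (by nlinarith [sq_nonneg (x - y)])

lemma aux_sum_zmod (n : ℕ) [NeZero n] (f : ZMod n → ℝ) :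
    ∑ i ∈ Finset.range n, f (i : ZMod n) = ∑ a : ZMod n, f a := by
  refine Finset.sum_nbij' (i := fun i => (i : ZMod n)) (j := fun a => a.val) ?_ ?_ ?_ ?_ ?_
  · intro i _; exact Finset.mem_univ _
  · intro a _; exact Finset.mem_range.mpr (ZMod.val_lt a)
  · intro i hi; exact ZMod.val_cast_of_lt (Finset.mem_range.mp hi)
  · intro a _; exact ZMod.natCast_rightInverse a
  · intro i _; rfl

lemma aux_sum_shift (n : ℕ) [NeZero n] (g : ZMod n → ℝ) (v : ZMod n) :
    ∑ a : ZMod n, g (a + v) = ∑ a : ZMod n, g a :=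
  Fintype.sum_equiv (Equiv.addRight v) (fun a => g (a + v)) g (fun _ => rfl)

lemma aux_sum_grid (c m : ℕ) (hc : 0 < c) (F : ℕ → ℝ) :
    ∑ j ∈ Finset.range c, ∑ g ∈ Finset.range m, F (j + g * c) =
    ∑ k ∈ Finset.range (m * c), F k := by
  rw [← Finset.sum_product']
  refine Finset.sum_nbij' (i := fun p => p.1 + p.2 * c) (j := fun k => (k % c, k / c))
    ?_ ?_ ?_ ?_ ?_
  · rintro ⟨j, g⟩ hp
    simp only [Finset.mem_product, Finset.mem_range] at hp ⊢
    calc j + g * c < c + g * c := by omega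
      _ = (g + 1) * c := by ring
      _ ≤ m * c := Nat.mul_le_mul_right c hp.2
  · intro k hk
    simp only [Finset.mem_product, Finset.mem_range] at hk ⊢
    exact ⟨Nat.mod_lt _ hc, (Nat.div_lt_iff_lt_mul hc).mpr hk⟩
  · rintro ⟨j, g⟩ hp
    simp only [Finset.mem_product, Finset.mem_range] at hp
    have h1 : (j + g * c) % c = j := by
      rw [Nat.add_mul_mod_self_right]; exact Nat.mod_eq_of_lt hp.1
    have h2 : (j + g * c) / c = g := by
      rw [Nat.add_mul_div_right _ _ hc, Nat.div_eq_of_lt hp.1]; omega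
    simp [h1, h2]
  · intro k _; exact Nat.mod_add_div' k c
  · intro p _; rfl

end Aux

/-- Lemma 2: let `j*` be an offset minimizing `SOL_j`, let `π` be any
ordering of the `m` groups of offset `j*`, and let the vehicle drive empty connecting legs
from the final delivery point `t_{σ(a)}` of group trip `π(k)` to the first pickup point
`s_{σ(a')}` of group trip `π(k+1)`; `‖S₀‖` is the total length of these empty legs
(together with nonnegative initial and final empty legs). Then the total length
`SOL = SOL_{j*} + ‖S₀‖` of the resulting route satisfies
`SOL ≤ (1/c)·Σ_i ‖s_i − t_i‖ + √2·((c−1)/c)·‖T‖ + ‖S₀‖`. -/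
theorem stmt_10 (d c m : ℕ) (hd : 1 ≤ d) (hc : 0 < c) (hm : 0 < m) (n : ℕ) (hn : n = m * c)
    (s t : ZMod n → Pt d) (σ : Equiv.Perm (ZMod n))
    (jstar : ℕ) (hjstar : jstar < c)
    (hmin : ∀ j < c, SOLcost s t σ c m jstar ≤ SOLcost s t σ c m j)
    (π : Equiv.Perm (ZMod m))
    (Linit Lfin : ℝ) (hLinit : 0 ≤ Linit) (hLfin : 0 ≤ Lfin)
    (S0 : ℝ)
    (hS0 : S0 = Linit
      + (∑ k ∈ Finset.range (m - 1),
          ‖t (σ (groupStart n c jstar (π (k : ZMod m)).val))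
            - s (σ (groupStart n c jstar (π ((k : ZMod m) + 1)).val))‖)
      + Lfin)
    (SOL : ℝ) (hSOL : SOL = SOLcost s t σ c m jstar + S0) :
    SOL ≤ (1 / (c : ℝ)) * (∑ i ∈ Finset.range n, ‖s (i : ZMod n) - t (i : ZMod n)‖)
      + Real.sqrt 2 * (((c : ℝ) - 1) / (c : ℝ)) * tourLength s t σ + S0 := by
  have hn0 : 0 < n := by rw [hn]; exact Nat.mul_pos hm hc
  haveI : NeZero n := ⟨hn0.ne'⟩
  set g : ZMod n → ℝ := fun b => reqDist s t (σ b) (σ (b + 1)) with hg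
  have hT : tourLength s t σ = ∑ a : ZMod n, g a := aux_sum_zmod n g
  set Sst : ℝ := ∑ i ∈ Finset.range n, ‖s (i : ZMod n) - t (i : ZMod n)‖ with hSst
  -- Step 1: sum of SOL_j over offsets equals sum of lifo costs over all starts
  have hsum : ∑ j ∈ Finset.range c, SOLcost s t σ c m j
      = ∑ a : ZMod n, lifoCost s t σ c a := by
    calc ∑ j ∈ Finset.range c, SOLcost s t σ c m j
        = ∑ j ∈ Finset.range c, ∑ g' ∈ Finset.range m,
            lifoCost s t σ c (((j + g' * c) + 1 : ℕ) : ZMod n) := by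
          unfold SOLcost
          refine Finset.sum_congr rfl fun j _ => Finset.sum_congr rfl fun g' _ => ?_
          have he : groupStart n c j g' = (((j + g' * c) + 1 : ℕ) : ZMod n) :=
            congrArg (Nat.cast : ℕ → ZMod n) (by omega : j + 1 + g' * c = j + g' * c + 1)
          rw [he]
      _ = ∑ k ∈ Finset.range (m * c), lifoCost s t σ c ((k + 1 : ℕ) : ZMod n) :=
          aux_sum_grid c m hc (fun k => lifoCost s t σ c ((k + 1 : ℕ) : ZMod n))
      _ = ∑ k ∈ Finset.range n, lifoCost s t σ c ((k : ZMod n) + 1) := by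
          rw [← hn]
          refine Finset.sum_congr rfl fun k _ => ?_
          congr 1
          push_cast
          ring
      _ = ∑ a : ZMod n, lifoCost s t σ c (a + 1) :=
          aux_sum_zmod n (fun a => lifoCost s t σ c (a + 1))
      _ = ∑ a : ZMod n, lifoCost s t σ c a :=
          aux_sum_shift n (lifoCost s t σ c) 1
  -- pointwise bound on lifoCost
  have hstep : ∀ a : ZMod n, lifoCost s t σ c a ≤
      Real.sqrt 2 * (∑ i ∈ Finset.range (c - 1), g (a + (i : ZMod n)))
      + ‖s (σ (a + ((c - 1 : ℕ) : ZMod n))) - t (σ (a + ((c - 1 : ℕ) : ZMod n)))‖ := by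
    intro a
    unfold lifoCost
    rw [Finset.mul_sum]
    have key : ∀ i ∈ Finset.range (c - 1),
        ‖s (σ (a + (i : ZMod n))) - s (σ (a + (i : ZMod n) + 1))‖
        + ‖t (σ (a + (i : ZMod n) + 1)) - t (σ (a + (i : ZMod n)))‖
        ≤ Real.sqrt 2 * g (a + (i : ZMod n)) := by
      intro i _
      rw [norm_sub_rev (t _)]
      simp only [hg, reqDist]
      exact aux_add_le_sqrt2 _ _ (norm_nonneg _) (norm_nonneg _)
    have h := Finset.sum_le_sum key
    rw [Finset.sum_add_distrib] at h
    linarith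
  -- sum the bound over all a
  have hdouble : ∑ a : ZMod n, ∑ i ∈ Finset.range (c - 1), g (a + (i : ZMod n))
      = ((c : ℝ) - 1) * ∑ a : ZMod n, g a := by
    rw [Finset.sum_comm]
    have : ∀ i ∈ Finset.range (c - 1),
        ∑ a : ZMod n, g (a + (i : ZMod n)) = ∑ a : ZMod n, g a :=
      fun i _ => aux_sum_shift n g _
    rw [Finset.sum_congr rfl this, Finset.sum_const, Finset.card_range, nsmul_eq_mul,
      Nat.cast_sub hc, Nat.cast_one]
  have hlast : ∑ a : ZMod n,
      ‖s (σ (a + ((c - 1 : ℕ) : ZMod n))) - t (σ (a + ((c - 1 : ℕ) : ZMod n)))‖ = Sst := by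
    rw [aux_sum_shift n (fun b => ‖s (σ b) - t (σ b)‖) ((c - 1 : ℕ) : ZMod n)]
    rw [Fintype.sum_equiv σ (fun a => ‖s (σ a) - t (σ a)‖) (fun b => ‖s b - t b‖)
      (fun a => rfl)]
    exact (aux_sum_zmod n (fun b => ‖s b - t b‖)).symm
  have hbound : ∑ a : ZMod n, lifoCost s t σ c a
      ≤ Sst + Real.sqrt 2 * ((c : ℝ) - 1) * tourLength s t σ := by
    calc ∑ a : ZMod n, lifoCost s t σ c a
        ≤ ∑ a : ZMod n, (Real.sqrt 2 * (∑ i ∈ Finset.range (c - 1), g (a + (i : ZMod n)))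
            + ‖s (σ (a + ((c - 1 : ℕ) : ZMod n))) - t (σ (a + ((c - 1 : ℕ) : ZMod n)))‖) :=
          Finset.sum_le_sum fun a _ => hstep a
      _ = Real.sqrt 2 * (∑ a : ZMod n, ∑ i ∈ Finset.range (c - 1), g (a + (i : ZMod n)))
            + Sst := by
          rw [Finset.sum_add_distrib, ← Finset.mul_sum, hlast]
      _ = Sst + Real.sqrt 2 * ((c : ℝ) - 1) * tourLength s t σ := by
          rw [hdouble, hT]; ring
  -- minimality: c * SOL_{j*} ≤ sum over offsets
  have hmin' : (c : ℝ) * SOLcost s t σ c m jstar ≤ ∑ j ∈ Finset.range c, SOLcost s t σ c m j := by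
    have h := Finset.card_nsmul_le_sum (Finset.range c) (fun j => SOLcost s t σ c m j)
      (SOLcost s t σ c m jstar) (fun j hj => hmin j (Finset.mem_range.mp hj))
    rwa [Finset.card_range, nsmul_eq_mul] at h
  have hcR : (0 : ℝ) < c := by exact_mod_cast hc
  have hkey : SOLcost s t σ c m jstar
      ≤ (1 / (c : ℝ)) * Sst + Real.sqrt 2 * (((c : ℝ) - 1) / (c : ℝ)) * tourLength s t σ := by
    have h2 : (1 / (c : ℝ)) * Sst + Real.sqrt 2 * (((c : ℝ) - 1) / (c : ℝ)) * tourLength s t σ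
        = (Sst + Real.sqrt 2 * ((c : ℝ) - 1) * tourLength s t σ) / c := by
      field_simp
    rw [h2, le_div_iff₀ hcR, mul_comm]
    calc (c : ℝ) * SOLcost s t σ c m jstar
        ≤ ∑ j ∈ Finset.range c, SOLcost s t σ c m j := hmin'
      _ = ∑ a : ZMod n, lifoCost s t σ c a := hsum
      _ ≤ _ := hbound
  rw [hSOL]
  linarith
end
end
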